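/- Craig interpolation for CoPC: if Γ, Δ ⇒ φ is derivable in G3-CoPC, then there exists a formula σ in the common language of Γ and Δ ∪ {φ} (allowing σ to be built from ⊤ and ¬ when the common language is empty), such that Γ ⇒ σ and Δ, σ ⇒ φ are derivable in G3-CoPC. -/
import Mathlib


inductive Fml where
  | var : Nat → Fml
  | top : Fml
  | and : Fml → Fml → Fml
  | or  : Fml → Fml → Fml
  | imp : Fml → Fml → Fml
  | neg : Fml → Fml
deriving DecidableEq

/-- Names for the four possible negation rules. -/
inductive NegRule where
  | n | nef | copc | an
deriving DecidableEq

/-- `Der R Γ φ k`: the sequent `Γ ⇒ φ` is derivable with height at most `k`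
in the G3 calculus whose negation rules are those satisfying `R`.
Axioms are available at every height; each rule adds one to the height. -/
inductive Der (R : NegRule → Prop) : Multiset Fml → Fml → Nat → Prop where
  | ax (Γ : Multiset Fml) (p k) : Der R (Fml.var p ::ₘ Γ) (Fml.var p) k
  | top (Γ : Multiset Fml) (k) : Der R Γ Fml.top k
  | andR {Γ α β k} : Der R Γ α k → Der R Γ β k → Der R Γ (Fml.and α β) (k+1)
  | andL {Γ α β φ k} : Der R (α ::ₘ β ::ₘ Γ) φ k → Der R (Fml.and α β ::ₘ Γ) φ (k+1)
  | orR1 {Γ α β k} : Der R Γ α k → Der R Γ (Fml.or α β) (k+1)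
  | orR2 {Γ α β k} : Der R Γ β k → Der R Γ (Fml.or α β) (k+1)
  | orL {Γ α β φ k} : Der R (α ::ₘ Γ) φ k → Der R (β ::ₘ Γ) φ k →
      Der R (Fml.or α β ::ₘ Γ) φ (k+1)
  | impR {Γ α β k} : Der R (α ::ₘ Γ) β k → Der R Γ (Fml.imp α β) (k+1)
  | impL {Γ α β φ k} : Der R (Fml.imp α β ::ₘ Γ) α k → Der R (β ::ₘ Γ) φ k →
      Der R (Fml.imp α β ::ₘ Γ) φ (k+1)
  | nrule {Γ α β k} : R NegRule.n → Der R (β ::ₘ Fml.neg α ::ₘ Γ) α k →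
      Der R (α ::ₘ Fml.neg α ::ₘ Γ) β k → Der R (Fml.neg α ::ₘ Γ) (Fml.neg β) (k+1)
  | nef {Γ α β k} : R NegRule.nef → Der R (Fml.neg α ::ₘ Γ) α k →
      Der R (Fml.neg α ::ₘ Γ) (Fml.neg β) (k+1)
  | copc {Γ α β k} : R NegRule.copc → Der R (β ::ₘ Fml.neg α ::ₘ Γ) α k →
      Der R (Fml.neg α ::ₘ Γ) (Fml.neg β) (k+1)
  | an {Γ α k} : R NegRule.an → Der R (α ::ₘ Γ) (Fml.neg α) k → Der R Γ (Fml.neg α) (k+1)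

/-- The calculus G3-N. -/
def NCalc : NegRule → Prop := fun r => r = NegRule.n
/-- The calculus G3-NeF. -/
def NeFCalc : NegRule → Prop := fun r => r = NegRule.nef
/-- The calculus G3-CoPC. -/
def CoPCCalc : NegRule → Prop := fun r => r = NegRule.copc
/-- The calculus G3-MPC (contraposition plus (AN)). -/
def MPCCalc : NegRule → Prop := fun r => r = NegRule.copc ∨ r = NegRule.an

/-- Derivability (at some height). -/
def Derivable (R : NegRule → Prop) (Γ : Multiset Fml) (φ : Fml) : Prop := ∃ k, Der R Γ φ k

/-- The propositional variables occurring in a formula. -/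
def Fml.vars : Fml → Finset Nat
  | Fml.var p => {p}
  | Fml.top => ∅
  | Fml.and a b => a.vars ∪ b.vars
  | Fml.or a b => a.vars ∪ b.vars
  | Fml.imp a b => a.vars ∪ b.vars
  | Fml.neg a => a.vars

section Helpers
open Multiset

lemma perm3 (a b c : Fml) (s : Multiset Fml) :
    a ::ₘ b ::ₘ c ::ₘ s = c ::ₘ a ::ₘ b ::ₘ s := by
  rw [Multiset.cons_swap b c, Multiset.cons_swap a c]

lemma perm13 (a b c : Fml) (s : Multiset Fml) :
    a ::ₘ b ::ₘ c ::ₘ s = c ::ₘ b ::ₘ a ::ₘ s := by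
  rw [Multiset.cons_swap b c, Multiset.cons_swap a c, Multiset.cons_swap a b]

lemma der_mono {R} : ∀ {Γ φ k m}, Der R Γ φ k → k ≤ m → Der R Γ φ m := by
  intro Γ φ k m h
  induction h generalizing m with
  | ax Γ p k => exact fun _ => Der.ax Γ p m
  | top Γ k => exact fun _ => Der.top Γ m
  | andR h1 h2 ih1 ih2 =>
    intro hk; cases m with
    | zero => omega
    | succ m => exact Der.andR (ih1 (by omega)) (ih2 (by omega))
  | andL h ih =>
    intro hk; cases m with
    | zero => omega
    | succ m => exact Der.andL (ih (by omega))
  | orR1 h ih =>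
    intro hk; cases m with
    | zero => omega
    | succ m => exact Der.orR1 (ih (by omega))
  | orR2 h ih =>
    intro hk; cases m with
    | zero => omega
    | succ m => exact Der.orR2 (ih (by omega))
  | orL h1 h2 ih1 ih2 =>
    intro hk; cases m with
    | zero => omega
    | succ m => exact Der.orL (ih1 (by omega)) (ih2 (by omega))
  | impR h ih =>
    intro hk; cases m with
    | zero => omega
    | succ m => exact Der.impR (ih (by omega))
  | impL h1 h2 ih1 ih2 =>
    intro hk; cases m with
    | zero => omega
    | succ m => exact Der.impL (ih1 (by omega)) (ih2 (by omega))
  | nrule hR h1 h2 ih1 ih2 =>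
    intro hk; cases m with
    | zero => omega
    | succ m => exact Der.nrule hR (ih1 (by omega)) (ih2 (by omega))
  | nef hR h ih =>
    intro hk; cases m with
    | zero => omega
    | succ m => exact Der.nef hR (ih (by omega))
  | copc hR h ih =>
    intro hk; cases m with
    | zero => omega
    | succ m => exact Der.copc hR (ih (by omega))
  | an hR h ih =>
    intro hk; cases m with
    | zero => omega
    | succ m => exact Der.an hR (ih (by omega))

lemma der_wk {R} (ψ : Fml) : ∀ {Γ φ k}, Der R Γ φ k → Der R (ψ ::ₘ Γ) φ k := by
  intro Γ φ k h
  induction h with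
  | ax Γ p k => rw [Multiset.cons_swap]; exact Der.ax _ p k
  | top Γ k => exact Der.top _ k
  | andR h1 h2 ih1 ih2 => exact Der.andR ih1 ih2
  | andL h ih =>
    rw [Multiset.cons_swap]
    apply Der.andL
    rw [perm3]; exact ih
  | orR1 h ih => exact Der.orR1 ih
  | orR2 h ih => exact Der.orR2 ih
  | orL h1 h2 ih1 ih2 =>
    rw [Multiset.cons_swap]
    exact Der.orL (by rwa [Multiset.cons_swap] at ih1) (by rwa [Multiset.cons_swap] at ih2)
  | impR h ih => exact Der.impR (by rwa [Multiset.cons_swap] at ih)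
  | impL h1 h2 ih1 ih2 =>
    rw [Multiset.cons_swap]
    exact Der.impL (by rwa [Multiset.cons_swap] at ih1) (by rwa [Multiset.cons_swap] at ih2)
  | nrule hR h1 h2 ih1 ih2 =>
    rw [Multiset.cons_swap]
    refine Der.nrule hR ?_ ?_
    · rw [perm3]; exact ih1
    · rw [perm3]; exact ih2
  | nef hR h ih =>
    rw [Multiset.cons_swap]; exact Der.nef hR (by rwa [Multiset.cons_swap] at ih)
  | copc hR h ih =>
    rw [Multiset.cons_swap]
    refine Der.copc hR ?_
    rw [perm3]; exact ih
  | an hR h ih => exact Der.an hR (by rwa [Multiset.cons_swap] at ih)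

lemma split_cons {x : Fml} {S Γ Δ : Multiset Fml} (h : x ::ₘ S = Γ + Δ) :
    (∃ Γ', Γ = x ::ₘ Γ' ∧ S = Γ' + Δ) ∨ (∃ Δ', Δ = x ::ₘ Δ' ∧ S = Γ + Δ') := by
  have hx : x ∈ Γ + Δ := h ▸ Multiset.mem_cons_self x S
  rcases Multiset.mem_add.1 hx with hg | hd
  · left
    refine ⟨Γ.erase x, (Multiset.cons_erase hg).symm, ?_⟩
    have h2 : x ::ₘ S = x ::ₘ (Γ.erase x + Δ) := by
      rw [← Multiset.cons_add, Multiset.cons_erase hg]; exact h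
    exact (Multiset.cons_inj_right x).1 h2
  · right
    refine ⟨Δ.erase x, (Multiset.cons_erase hd).symm, ?_⟩
    have h2 : x ::ₘ S = x ::ₘ (Γ + Δ.erase x) := by
      rw [← Multiset.add_cons, Multiset.cons_erase hd]; exact h
    exact (Multiset.cons_inj_right x).1 h2

-- Derivable-level combinators
variable {R : NegRule → Prop}

lemma dperm {Γ Γ' : Multiset Fml} {φ} (h : Γ = Γ') (d : Derivable R Γ φ) :
    Derivable R Γ' φ := h ▸ d

lemma dwk (ψ : Fml) {Γ φ} (d : Derivable R Γ φ) : Derivable R (ψ ::ₘ Γ) φ :=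
  d.imp fun _ h => der_wk ψ h

lemma dax (p : Nat) (Γ : Multiset Fml) : Derivable R (Fml.var p ::ₘ Γ) (Fml.var p) :=
  ⟨0, Der.ax Γ p 0⟩

lemma dtop (Γ : Multiset Fml) : Derivable R Γ Fml.top := ⟨0, Der.top Γ 0⟩

lemma dandR {Γ α β} (d1 : Derivable R Γ α) (d2 : Derivable R Γ β) :
    Derivable R Γ (Fml.and α β) := by
  obtain ⟨k1, h1⟩ := d1; obtain ⟨k2, h2⟩ := d2
  exact ⟨max k1 k2 + 1, Der.andR (der_mono h1 (le_max_left _ _)) (der_mono h2 (le_max_right _ _))⟩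

lemma dandL {Γ α β φ} (d : Derivable R (α ::ₘ β ::ₘ Γ) φ) :
    Derivable R (Fml.and α β ::ₘ Γ) φ := by obtain ⟨k, h⟩ := d; exact ⟨k+1, Der.andL h⟩

lemma dorR1 {Γ α β} (d : Derivable R Γ α) : Derivable R Γ (Fml.or α β) := by
  obtain ⟨k, h⟩ := d; exact ⟨k+1, Der.orR1 h⟩

lemma dorR2 {Γ α β} (d : Derivable R Γ β) : Derivable R Γ (Fml.or α β) := by
  obtain ⟨k, h⟩ := d; exact ⟨k+1, Der.orR2 h⟩

lemma dorL {Γ α β φ} (d1 : Derivable R (α ::ₘ Γ) φ) (d2 : Derivable R (β ::ₘ Γ) φ) :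
    Derivable R (Fml.or α β ::ₘ Γ) φ := by
  obtain ⟨k1, h1⟩ := d1; obtain ⟨k2, h2⟩ := d2
  exact ⟨max k1 k2 + 1, Der.orL (der_mono h1 (le_max_left _ _)) (der_mono h2 (le_max_right _ _))⟩

lemma dimpR {Γ α β} (d : Derivable R (α ::ₘ Γ) β) : Derivable R Γ (Fml.imp α β) := by
  obtain ⟨k, h⟩ := d; exact ⟨k+1, Der.impR h⟩

lemma dimpL {Γ α β φ} (d1 : Derivable R (Fml.imp α β ::ₘ Γ) α)
    (d2 : Derivable R (β ::ₘ Γ) φ) : Derivable R (Fml.imp α β ::ₘ Γ) φ := by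
  obtain ⟨k1, h1⟩ := d1; obtain ⟨k2, h2⟩ := d2
  exact ⟨max k1 k2 + 1, Der.impL (der_mono h1 (le_max_left _ _)) (der_mono h2 (le_max_right _ _))⟩

lemma dcopc {Γ α β} (d : Derivable CoPCCalc (β ::ₘ Fml.neg α ::ₘ Γ) α) :
    Derivable CoPCCalc (Fml.neg α ::ₘ Γ) (Fml.neg β) := by
  obtain ⟨k, h⟩ := d; exact ⟨k+1, Der.copc rfl h⟩

lemma vars_trans {p : Nat} {S T : Multiset Fml} (h : ∃ δ ∈ S, p ∈ Fml.vars δ)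
    (f : ∀ δ ∈ S, ∃ δ' ∈ T, Fml.vars δ ⊆ Fml.vars δ') : ∃ δ' ∈ T, p ∈ Fml.vars δ' := by
  obtain ⟨δ, hδ, hp⟩ := h
  obtain ⟨δ', hδ', hsub⟩ := f δ hδ
  exact ⟨δ', hδ', hsub hp⟩

end Helpers

lemma sub_of_eq {x y : Fml} (h : x = y) {T : Finset Nat} (hsub : Fml.vars y ⊆ T) :
    Fml.vars x ⊆ T := h ▸ hsub

lemma interp_main : ∀ {S : Multiset Fml} {φ : Fml} {k : Nat},
    Der CoPCCalc S φ k → ∀ Γ Δ : Multiset Fml, S = Γ + Δ →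
    ∃ σ : Fml,
      (∀ p ∈ σ.vars, (∃ γ ∈ Γ, p ∈ γ.vars) ∧ (∃ δ ∈ φ ::ₘ Δ, p ∈ δ.vars)) ∧
      Derivable CoPCCalc Γ σ ∧ Derivable CoPCCalc (σ ::ₘ Δ) φ := by
  intro S φ k h
  induction h with
  | ax Γ0 p k0 =>
    intro Γ Δ hS
    rcases split_cons hS with ⟨Γ', hΓ, hS'⟩ | ⟨Δ', hΔ, hS'⟩
    · refine ⟨Fml.var p, ?_, ?_, dax p Δ⟩
      · intro q hq
        simp only [Fml.vars, Finset.mem_singleton] at hq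
        constructor
        · exact ⟨Fml.var p, by rw [hΓ]; exact Multiset.mem_cons_self _ _,
            by simp [Fml.vars, hq]⟩
        · exact ⟨Fml.var p, Multiset.mem_cons_self _ _, by simp [Fml.vars, hq]⟩
      · rw [hΓ]; exact dax p Γ'
    · refine ⟨Fml.top, ?_, dtop Γ, ?_⟩
      · intro q hq; simp [Fml.vars] at hq
      · rw [hΔ, Multiset.cons_swap]; exact dax p _
  | top Γ0 k0 =>
    intro Γ Δ hS
    refine ⟨Fml.top, ?_, dtop Γ, dtop _⟩
    intro q hq; simp [Fml.vars] at hq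
  | @andR Γ0 α β k0 h1 h2 ih1 ih2 =>
    intro Γ Δ hS
    obtain ⟨σ1, v1, l1, r1⟩ := ih1 Γ Δ hS
    obtain ⟨σ2, v2, l2, r2⟩ := ih2 Γ Δ hS
    refine ⟨σ1.and σ2, ?_, dandR l1 l2, ?_⟩
    · intro q hq
      simp only [Fml.vars, Finset.mem_union] at hq
      rcases hq with hq | hq
      · obtain ⟨cg, cd⟩ := v1 q hq
        refine ⟨cg, vars_trans cd ?_⟩
        intro δ hδ
        rcases Multiset.mem_cons.1 hδ with he | hδ
        · exact ⟨Fml.and α β, Multiset.mem_cons_self _ _,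
            sub_of_eq he (by simp only [Fml.vars]; exact Finset.subset_union_left)⟩
        · exact ⟨δ, Multiset.mem_cons_of_mem hδ, subset_rfl⟩
      · obtain ⟨cg, cd⟩ := v2 q hq
        refine ⟨cg, vars_trans cd ?_⟩
        intro δ hδ
        rcases Multiset.mem_cons.1 hδ with he | hδ
        · exact ⟨Fml.and α β, Multiset.mem_cons_self _ _,
            sub_of_eq he (by simp only [Fml.vars]; exact Finset.subset_union_right)⟩
        · exact ⟨δ, Multiset.mem_cons_of_mem hδ, subset_rfl⟩
    · apply dandL
      exact dandR (dperm (Multiset.cons_swap σ2 σ1 Δ) (dwk σ2 r1)) (dwk σ1 r2)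
  | @andL Γ0 α β ψ k0 h ih =>
    intro Γ Δ hS
    rcases split_cons hS with ⟨Γ', hΓ, hS'⟩ | ⟨Δ', hΔ, hS'⟩
    · obtain ⟨σ, v, l, r⟩ := ih (α ::ₘ β ::ₘ Γ') Δ
        (by rw [hS', Multiset.cons_add, Multiset.cons_add])
      refine ⟨σ, ?_, ?_, r⟩
      · intro q hq
        obtain ⟨cg, cd⟩ := v q hq
        refine ⟨vars_trans cg ?_, cd⟩
        intro δ hδ
        rw [hΓ]
        simp only [Multiset.mem_cons] at hδ
        rcases hδ with he | he | hδ
        · exact ⟨Fml.and α β, Multiset.mem_cons_self _ _,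
            sub_of_eq he (by simp only [Fml.vars]; exact Finset.subset_union_left)⟩
        · exact ⟨Fml.and α β, Multiset.mem_cons_self _ _,
            sub_of_eq he (by simp only [Fml.vars]; exact Finset.subset_union_right)⟩
        · exact ⟨δ, Multiset.mem_cons_of_mem hδ, subset_rfl⟩
      · rw [hΓ]; exact dandL l
    · obtain ⟨σ, v, l, r⟩ := ih Γ (α ::ₘ β ::ₘ Δ')
        (by rw [hS', Multiset.add_cons, Multiset.add_cons])
      refine ⟨σ, ?_, l, ?_⟩
      · intro q hq
        obtain ⟨cg, cd⟩ := v q hq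
        refine ⟨cg, vars_trans cd ?_⟩
        intro δ hδ
        rw [hΔ]
        simp only [Multiset.mem_cons] at hδ
        rcases hδ with he | he | he | hδ
        · exact ⟨ψ, Multiset.mem_cons_self _ _, sub_of_eq he subset_rfl⟩
        · exact ⟨Fml.and α β, by simp, sub_of_eq he (by simp only [Fml.vars]; exact Finset.subset_union_left)⟩
        · exact ⟨Fml.and α β, by simp, sub_of_eq he (by simp only [Fml.vars]; exact Finset.subset_union_right)⟩
        · exact ⟨δ, by simp [hδ], subset_rfl⟩
      · rw [hΔ]
        apply dperm (Multiset.cons_swap (Fml.and α β) σ Δ')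
        apply dandL
        exact dperm (perm3 α β σ Δ').symm r
  | @orR1 Γ0 α β k0 h ih =>
    intro Γ Δ hS
    obtain ⟨σ, v, l, r⟩ := ih Γ Δ hS
    refine ⟨σ, ?_, l, dorR1 r⟩
    intro q hq
    obtain ⟨cg, cd⟩ := v q hq
    refine ⟨cg, vars_trans cd ?_⟩
    intro δ hδ
    rcases Multiset.mem_cons.1 hδ with he | hδ
    · exact ⟨Fml.or α β, Multiset.mem_cons_self _ _,
        sub_of_eq he (by simp only [Fml.vars]; exact Finset.subset_union_left)⟩
    · exact ⟨δ, Multiset.mem_cons_of_mem hδ, subset_rfl⟩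
  | @orR2 Γ0 α β k0 h ih =>
    intro Γ Δ hS
    obtain ⟨σ, v, l, r⟩ := ih Γ Δ hS
    refine ⟨σ, ?_, l, dorR2 r⟩
    intro q hq
    obtain ⟨cg, cd⟩ := v q hq
    refine ⟨cg, vars_trans cd ?_⟩
    intro δ hδ
    rcases Multiset.mem_cons.1 hδ with he | hδ
    · exact ⟨Fml.or α β, Multiset.mem_cons_self _ _,
        sub_of_eq he (by simp only [Fml.vars]; exact Finset.subset_union_right)⟩
    · exact ⟨δ, Multiset.mem_cons_of_mem hδ, subset_rfl⟩
  | @orL Γ0 α β ψ k0 h1 h2 ih1 ih2 =>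
    intro Γ Δ hS
    rcases split_cons hS with ⟨Γ', hΓ, hS'⟩ | ⟨Δ', hΔ, hS'⟩
    · obtain ⟨σ1, v1, l1, r1⟩ := ih1 (α ::ₘ Γ') Δ (by rw [hS', Multiset.cons_add])
      obtain ⟨σ2, v2, l2, r2⟩ := ih2 (β ::ₘ Γ') Δ (by rw [hS', Multiset.cons_add])
      refine ⟨σ1.or σ2, ?_, ?_, dorL r1 r2⟩
      · intro q hq
        simp only [Fml.vars, Finset.mem_union] at hq
        rcases hq with hq | hq
        · obtain ⟨cg, cd⟩ := v1 q hq
          refine ⟨vars_trans cg ?_, cd⟩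
          intro δ hδ
          rw [hΓ]
          rcases Multiset.mem_cons.1 hδ with he | hδ
          · exact ⟨Fml.or α β, Multiset.mem_cons_self _ _,
              sub_of_eq he (by simp only [Fml.vars]; exact Finset.subset_union_left)⟩
          · exact ⟨δ, Multiset.mem_cons_of_mem hδ, subset_rfl⟩
        · obtain ⟨cg, cd⟩ := v2 q hq
          refine ⟨vars_trans cg ?_, cd⟩
          intro δ hδ
          rw [hΓ]
          rcases Multiset.mem_cons.1 hδ with he | hδ
          · exact ⟨Fml.or α β, Multiset.mem_cons_self _ _,
              sub_of_eq he (by simp only [Fml.vars]; exact Finset.subset_union_right)⟩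
          · exact ⟨δ, Multiset.mem_cons_of_mem hδ, subset_rfl⟩
      · rw [hΓ]; exact dorL (dorR1 l1) (dorR2 l2)
    · obtain ⟨σ1, v1, l1, r1⟩ := ih1 Γ (α ::ₘ Δ') (by rw [hS', Multiset.add_cons])
      obtain ⟨σ2, v2, l2, r2⟩ := ih2 Γ (β ::ₘ Δ') (by rw [hS', Multiset.add_cons])
      refine ⟨σ1.and σ2, ?_, dandR l1 l2, ?_⟩
      · intro q hq
        simp only [Fml.vars, Finset.mem_union] at hq
        rcases hq with hq | hq
        · obtain ⟨cg, cd⟩ := v1 q hq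
          refine ⟨cg, vars_trans cd ?_⟩
          intro δ hδ
          rw [hΔ]
          simp only [Multiset.mem_cons] at hδ
          rcases hδ with he | he | hδ
          · exact ⟨ψ, by simp, sub_of_eq he subset_rfl⟩
          · exact ⟨Fml.or α β, by simp, sub_of_eq he (by simp only [Fml.vars]; exact Finset.subset_union_left)⟩
          · exact ⟨δ, by simp [hδ], subset_rfl⟩
        · obtain ⟨cg, cd⟩ := v2 q hq
          refine ⟨cg, vars_trans cd ?_⟩
          intro δ hδ
          rw [hΔ]
          simp only [Multiset.mem_cons] at hδ
          rcases hδ with he | he | hδ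
          · exact ⟨ψ, by simp, sub_of_eq he subset_rfl⟩
          · exact ⟨Fml.or α β, by simp, sub_of_eq he (by simp only [Fml.vars]; exact Finset.subset_union_right)⟩
          · exact ⟨δ, by simp [hδ], subset_rfl⟩
      · rw [hΔ]
        apply dandL
        apply dperm (perm3 σ1 σ2 (Fml.or α β) Δ').symm
        apply dorL
        · exact dperm (perm13 σ2 σ1 α Δ') (dwk σ2 r1)
        · exact dperm (perm3 σ1 σ2 β Δ') (dwk σ1 r2)
  | @impR Γ0 α β k0 h ih =>
    intro Γ Δ hS
    obtain ⟨σ, v, l, r⟩ := ih Γ (α ::ₘ Δ) (by rw [hS, Multiset.add_cons])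
    refine ⟨σ, ?_, l, ?_⟩
    · intro q hq
      obtain ⟨cg, cd⟩ := v q hq
      refine ⟨cg, vars_trans cd ?_⟩
      intro δ hδ
      simp only [Multiset.mem_cons] at hδ
      rcases hδ with he | he | hδ
      · exact ⟨Fml.imp α β, by simp, sub_of_eq he (by simp only [Fml.vars]; exact Finset.subset_union_right)⟩
      · exact ⟨Fml.imp α β, by simp, sub_of_eq he (by simp only [Fml.vars]; exact Finset.subset_union_left)⟩
      · exact ⟨δ, by simp [hδ], subset_rfl⟩
    · exact dimpR (dperm (Multiset.cons_swap σ α Δ) r)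
  | @impL Γ0 α β ψ k0 h1 h2 ih1 ih2 =>
    intro Γ Δ hS
    rcases split_cons hS with ⟨Γ', hΓ, hS'⟩ | ⟨Δ', hΔ, hS'⟩
    · obtain ⟨σ1, v1, l1, r1⟩ := ih1 Δ (Fml.imp α β ::ₘ Γ')
        (by rw [hS', Multiset.add_cons, add_comm Γ' Δ])
      obtain ⟨σ2, v2, l2, r2⟩ := ih2 (β ::ₘ Γ') Δ (by rw [hS', Multiset.cons_add])
      refine ⟨σ1.imp σ2, ?_, ?_, ?_⟩
      · intro q hq
        simp only [Fml.vars, Finset.mem_union] at hq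
        rcases hq with hq | hq
        · obtain ⟨cg, cd⟩ := v1 q hq
          constructor
          · refine vars_trans cd ?_
            intro δ hδ
            rw [hΓ]
            simp only [Multiset.mem_cons] at hδ
            rcases hδ with he | he | hδ
            · exact ⟨Fml.imp α β, by simp, sub_of_eq he (by simp only [Fml.vars]; exact Finset.subset_union_left)⟩
            · exact ⟨Fml.imp α β, by simp, sub_of_eq he subset_rfl⟩
            · exact ⟨δ, by simp [hδ], subset_rfl⟩
          · refine vars_trans cg ?_
            intro δ hδ
            exact ⟨δ, Multiset.mem_cons_of_mem hδ, subset_rfl⟩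
        · obtain ⟨cg, cd⟩ := v2 q hq
          refine ⟨vars_trans cg ?_, cd⟩
          intro δ hδ
          rw [hΓ]
          rcases Multiset.mem_cons.1 hδ with he | hδ
          · exact ⟨Fml.imp α β, by simp, sub_of_eq he (by simp only [Fml.vars]; exact Finset.subset_union_right)⟩
          · exact ⟨δ, Multiset.mem_cons_of_mem hδ, subset_rfl⟩
      · rw [hΓ]
        apply dimpR
        apply dperm (Multiset.cons_swap (Fml.imp α β) σ1 Γ')
        apply dimpL
        · exact dperm (Multiset.cons_swap σ1 (Fml.imp α β) Γ') r1
        · exact dperm (Multiset.cons_swap σ1 β Γ') (dwk σ1 l2)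
      · exact dimpL (dwk _ l1) r2
    · obtain ⟨σ1, v1, l1, r1⟩ := ih1 Γ (Fml.imp α β ::ₘ Δ') (by rw [hS', Multiset.add_cons])
      obtain ⟨σ2, v2, l2, r2⟩ := ih2 Γ (β ::ₘ Δ') (by rw [hS', Multiset.add_cons])
      refine ⟨σ1.and σ2, ?_, dandR l1 l2, ?_⟩
      · intro q hq
        simp only [Fml.vars, Finset.mem_union] at hq
        rcases hq with hq | hq
        · obtain ⟨cg, cd⟩ := v1 q hq
          refine ⟨cg, vars_trans cd ?_⟩
          intro δ hδ
          rw [hΔ]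
          simp only [Multiset.mem_cons] at hδ
          rcases hδ with he | he | hδ
          · exact ⟨Fml.imp α β, by simp, sub_of_eq he (by simp only [Fml.vars]; exact Finset.subset_union_left)⟩
          · exact ⟨Fml.imp α β, by simp, sub_of_eq he subset_rfl⟩
          · exact ⟨δ, by simp [hδ], subset_rfl⟩
        · obtain ⟨cg, cd⟩ := v2 q hq
          refine ⟨cg, vars_trans cd ?_⟩
          intro δ hδ
          rw [hΔ]
          simp only [Multiset.mem_cons] at hδ
          rcases hδ with he | he | hδ
          · exact ⟨ψ, by simp, sub_of_eq he subset_rfl⟩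
          · exact ⟨Fml.imp α β, by simp, sub_of_eq he (by simp only [Fml.vars]; exact Finset.subset_union_right)⟩
          · exact ⟨δ, by simp [hδ], subset_rfl⟩
      · rw [hΔ]
        apply dandL
        apply dperm (perm3 σ1 σ2 (Fml.imp α β) Δ').symm
        apply dimpL
        · exact dperm (perm13 σ2 σ1 (Fml.imp α β) Δ') (dwk σ2 r1)
        · exact dperm (perm3 σ1 σ2 β Δ') (dwk σ1 r2)
  | nrule hR h1 h2 ih1 ih2 => simp [CoPCCalc] at hR
  | nef hR h ih => simp [CoPCCalc] at hR
  | @copc Γ0 α β k0 hR h ih =>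
    intro Γ Δ hS
    rcases split_cons hS with ⟨Γ', hΓ, hS'⟩ | ⟨Δ', hΔ, hS'⟩
    · obtain ⟨σ1, v1, l1, r1⟩ := ih (β ::ₘ Δ) (Fml.neg α ::ₘ Γ')
        (by rw [hS', Multiset.cons_add, Multiset.add_cons, add_comm Γ' Δ])
      refine ⟨σ1.neg, ?_, ?_, ?_⟩
      · intro q hq
        simp only [Fml.vars] at hq
        obtain ⟨cg, cd⟩ := v1 q hq
        constructor
        · refine vars_trans cd ?_
          intro δ hδ
          rw [hΓ]
          simp only [Multiset.mem_cons] at hδ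
          rcases hδ with he | he | hδ
          · exact ⟨Fml.neg α, by simp, sub_of_eq he (by simp only [Fml.vars]; exact subset_rfl)⟩
          · exact ⟨Fml.neg α, by simp, sub_of_eq he subset_rfl⟩
          · exact ⟨δ, by simp [hδ], subset_rfl⟩
        · refine vars_trans cg ?_
          intro δ hδ
          rcases Multiset.mem_cons.1 hδ with he | hδ
          · exact ⟨Fml.neg β, Multiset.mem_cons_self _ _,
              sub_of_eq he (by simp only [Fml.vars]; exact subset_rfl)⟩
          · exact ⟨δ, Multiset.mem_cons_of_mem hδ, subset_rfl⟩
      · rw [hΓ]; exact dcopc r1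
      · exact dcopc (dperm (Multiset.cons_swap σ1.neg β Δ) (dwk σ1.neg l1))
    · obtain ⟨σ, v, l, r⟩ := ih Γ (β ::ₘ Fml.neg α ::ₘ Δ')
        (by rw [hS', Multiset.add_cons, Multiset.add_cons])
      refine ⟨σ, ?_, l, ?_⟩
      · intro q hq
        obtain ⟨cg, cd⟩ := v q hq
        refine ⟨cg, vars_trans cd ?_⟩
        intro δ hδ
        rw [hΔ]
        simp only [Multiset.mem_cons] at hδ
        rcases hδ with he | he | he | hδ
        · exact ⟨Fml.neg α, by simp, sub_of_eq he (by simp only [Fml.vars]; exact subset_rfl)⟩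
        · exact ⟨Fml.neg β, by simp, sub_of_eq he (by simp only [Fml.vars]; exact subset_rfl)⟩
        · exact ⟨Fml.neg α, by simp, sub_of_eq he subset_rfl⟩
        · exact ⟨δ, by simp [hδ], subset_rfl⟩
      · rw [hΔ]
        apply dperm (Multiset.cons_swap (Fml.neg α) σ Δ')
        apply dcopc
        exact dperm (perm3 β (Fml.neg α) σ Δ').symm r
  | an hR h ih => simp [CoPCCalc] at hR

/-- Craig interpolation for CoPC: every derivable split sequent
Γ, Δ ⇒ φ has an interpolant σ whose variables occur both in Γ and in Δ ∪ {φ}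
(in particular, if the common language is empty, σ contains no variables,
i.e. it is built from ⊤ by connectives only). -/
theorem craig_interpolation_CoPC :
    ∀ (Γ Δ : Multiset Fml) (φ : Fml),
      Derivable CoPCCalc (Γ + Δ) φ →
      ∃ σ : Fml,
        (∀ p ∈ σ.vars, (∃ γ ∈ Γ, p ∈ γ.vars) ∧ (∃ δ ∈ φ ::ₘ Δ, p ∈ δ.vars)) ∧
        Derivable CoPCCalc Γ σ ∧ Derivable CoPCCalc (σ ::ₘ Δ) φ := by
  intro Γ Δ φ h
  obtain ⟨k, h⟩ := h
  exact interp_main h Γ Δ rfl
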